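/- The universal Novikov field Λ over ℚ is a field: every nonzero element Σ a(ρ) q^ρ has a multiplicative inverse in Λ. -/

import Mathlib

/-- The defining finiteness property of elements of the universal Novikov field. -/
def NovikovCondition (a : ℝ → ℚ) : Prop :=
  ∀ ε : ℝ, {ρ : ℝ | ρ < ε ∧ a ρ ≠ 0}.Finite

/-- Convolution product on formal sums `Σ a(ρ) q^ρ`, given by
`q^{ρ₁} q^{ρ₂} = q^{ρ₁+ρ₂}` extended bilinearly. -/
noncomputable def novikovMul (a b : ℝ → ℚ) : ℝ → ℚ :=
  fun ρ : ℝ => ∑ᶠ ρ₁ : ℝ, a ρ₁ * b (ρ - ρ₁)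

/-- The multiplicative unit `q^0`: the function supported at `0` with value `1`. -/
noncomputable def novikovOne : ℝ → ℚ := fun ρ : ℝ => if ρ = 0 then 1 else 0


/-!
The Novikov series are exactly the Hahn series in `ℚ((q^ℝ))` whose support has finitely many
points below every bound, and `ℚ((q^ℝ))` is a field. So it suffices that the inverse `B` of a
nonzero Novikov series `A` is again Novikov. Write `A = c q^v + A'` with `A'` supported in
`(v, ∞)`; then `B = c⁻¹ q^{-v} (1 - A' B)`, so every exponent of `B` other than `-v` is an
exponent of `B` plus a gap `δ - v` with `δ` an exponent of `A'`. These gaps are bounded below by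
some `d₀ > 0`, so by induction `B` has finitely many exponents below `-v + n d₀` for every `n`,
and these bounds are unbounded because `ℝ` is archimedean.
-/

open Set
open scoped Pointwise

def FiniteBelow {Γ : Type*} [Preorder Γ] (S : Set Γ) : Prop :=
  ∀ ε, (Iio ε ∩ S).Finite

variable {Γ : Type*}

theorem novikovCondition_iff_finiteBelow_support (a : ℝ → ℚ) :
    NovikovCondition a ↔ FiniteBelow (Function.support a) :=
  Iff.rfl

theorem FiniteBelow.mono [Preorder Γ] {S T : Set Γ} (hS : FiniteBelow S) (hTS : T ⊆ S) :
    FiniteBelow T :=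
  fun ε => (hS ε).subset (inter_subset_inter_right _ hTS)

theorem FiniteBelow.isWF [LinearOrder Γ] {S : Set Γ} (hS : FiniteBelow S) : S.IsWF := by
  rw [Set.isWF_iff_no_descending_seq]
  intro f hf hmem
  refine Set.infinite_of_injective_forall_mem (f := fun n => f (n + 1))
    (hf.injective.comp (add_left_injective 1)) (fun n => ?_) (hS (f 0))
  exact ⟨hf (Nat.succ_pos n), hmem _⟩

section ArchimedeanGroup

variable [AddCommGroup Γ] [LinearOrder Γ] [IsOrderedAddMonoid Γ]

theorem FiniteBelow.image_sub_right {S : Set Γ} (hS : FiniteBelow S) (g : Γ) :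
    FiniteBelow ((· - g) '' S) := by
  intro ε
  refine ((hS (ε + g)).image (· - g)).subset ?_
  rintro _ ⟨hlt, σ, hσ, rfl⟩
  exact ⟨σ, ⟨sub_lt_iff_lt_add.mp hlt, hσ⟩, rfl⟩

variable [Archimedean Γ]

theorem FiniteBelow.of_subset_insert_add_of_le {S D : Set Γ} {m d₀ : Γ} (hd₀ : 0 < d₀)
    (hD : FiniteBelow D) (hd₀D : ∀ d ∈ D, d₀ ≤ d) (hmS : ∀ τ ∈ S, m ≤ τ)
    (hS : S ⊆ insert m (S + D)) : FiniteBelow S := by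
  have key : ∀ n : ℕ, (Iio (m + n • d₀) ∩ S).Finite := by
    intro n
    induction n with
    | zero =>
      exact finite_empty.subset fun τ ⟨hτ, hτS⟩ =>
        absurd (hmS τ hτS) (by simpa using hτ : τ < m).not_ge
    | succ n ih =>
      refine ((ih.image2 (· + ·) (hD ((n + 1) • d₀))).insert m).subset ?_
      rintro τ ⟨hτ, hτS⟩
      obtain rfl | ⟨σ, hσ, d, hd, rfl⟩ := hS hτS
      · exact mem_insert _ _
      · rw [mem_Iio, succ_nsmul, ← add_assoc] at hτ
        refine mem_insert_of_mem _ ⟨σ, ⟨?_, hσ⟩, d, ⟨?_, hd⟩, rfl⟩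
        · exact lt_of_add_lt_add_right ((add_le_add_right (hd₀D d hd) σ).trans_lt hτ)
        · rw [mem_Iio, succ_nsmul]
          exact lt_of_add_lt_add_left
            ((add_le_add_left (hmS σ hσ) d).trans_lt (by rwa [← add_assoc]))
  intro ε
  obtain ⟨n, hn⟩ := Archimedean.arch (ε - m) hd₀
  exact (key n).subset (inter_subset_inter_left _ (Iio_subset_Iio (sub_le_iff_le_add'.mp hn)))

theorem FiniteBelow.of_subset_insert_add {S D : Set Γ} {m : Γ} (hD : FiniteBelow D)
    (hD_pos : ∀ d ∈ D, 0 < d) (hmS : ∀ τ ∈ S, m ≤ τ) (hS : S ⊆ insert m (S + D)) :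
    FiniteBelow S := by
  rcases D.eq_empty_or_nonempty with rfl | hne
  · rw [add_empty, insert_empty_eq] at hS
    exact fun _ => (finite_singleton m).subset (inter_subset_right.trans hS)
  · exact of_subset_insert_add_of_le (hD_pos _ (hD.isWF.min_mem hne)) hD
      (fun _ => hD.isWF.min_le hne) hmS hS

end ArchimedeanGroup

namespace HahnSeries

theorem support_sub_single_order_leadingCoeff {R : Type*} [Ring R] [Zero Γ] [LinearOrder Γ]
    (A : HahnSeries Γ R) :
    (A - single A.order A.leadingCoeff).support = A.support ∩ Ioi A.order := by
  ext δ
  rw [mem_support, coeff_sub, mem_inter_iff, mem_support, mem_Ioi]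
  obtain rfl | hne := eq_or_ne δ A.order
  · simp [leadingCoeff_eq]
  · rw [coeff_single_of_ne hne, sub_zero]
    exact ⟨fun hδ => ⟨hδ, (order_le_of_coeff_ne_zero hδ).lt_of_ne' hne⟩, And.left⟩

variable [AddCommGroup Γ] [LinearOrder Γ] [IsOrderedAddMonoid Γ] [Archimedean Γ]
  {K : Type*} [Field K]

theorem finiteBelow_support_inv {A : HahnSeries Γ K} (hA : FiniteBelow A.support) :
    FiniteBelow A⁻¹.support := by
  rcases eq_or_ne A 0 with rfl | hA0
  · simpa using hA
  set B := A⁻¹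
  have hAB : A * B = 1 := mul_inv_cancel₀ hA0
  set v := A.order
  set c := A.leadingCoeff
  have hc : c ≠ 0 := leadingCoeff_ne_zero.mpr hA0
  have hA' : (A - single v c).support = A.support ∩ Ioi v :=
    support_sub_single_order_leadingCoeff A
  have hB : B = single (-v) c⁻¹ * (1 - (A - single v c) * B) := by
    calc B = single (-v) c⁻¹ * single v c * B := by
          rw [single_mul_single, neg_add_cancel, inv_mul_cancel₀ hc, single_zero_one, one_mul]
      _ = single (-v) c⁻¹ * (1 - (A - single v c) * B) := by rw [← hAB, mul_assoc]; ring
  have hB_order : B.order = -v := by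
    have := order_mul hA0 (right_ne_zero_of_mul_eq_one hAB)
    rw [hAB, order_one] at this
    exact eq_neg_of_add_eq_zero_right this.symm
  refine FiniteBelow.of_subset_insert_add (D := (· - v) '' (A.support ∩ Ioi v)) (m := -v)
    ((hA.mono inter_subset_left).image_sub_right v) ?_ ?_ ?_
  · rintro _ ⟨δ, ⟨-, hvδ⟩, rfl⟩
    exact sub_pos.mpr hvδ
  · exact fun τ hτ => hB_order ▸ order_le_of_coeff_ne_zero hτ
  · intro τ hτ
    rw [mem_support, hB, coeff_single_mul, sub_neg_eq_add, coeff_sub, coeff_one] at hτ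
    obtain h0 | h0 := eq_or_ne (τ + v) 0
    · exact Or.inl (eq_neg_of_add_eq_zero_left h0)
    · rw [if_neg h0, zero_sub, mul_neg, neg_ne_zero] at hτ
      obtain ⟨δ, hδ, σ, hσ, hδσ : δ + σ = τ + v⟩ :=
        support_mul_subset (right_ne_zero_of_mul hτ)
      refine mem_insert_of_mem _ ⟨σ, hσ, δ - v, ⟨δ, hA' ▸ hδ, rfl⟩, ?_⟩
      change σ + (δ - v) = τ
      rw [← add_sub_assoc, add_comm σ, hδσ, add_sub_cancel_right]

end HahnSeries

theorem novikovMul_coeff (A B : HahnSeries ℝ ℚ) :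
    novikovMul A.coeff B.coeff = (A * B).coeff := by
  funext ρ
  set P := Finset.antidiagonal A.isPWO_support B.isPWO_support ρ
  have hsupp :
      Function.support (fun ρ₁ => A.coeff ρ₁ * B.coeff (ρ - ρ₁)) ⊆ P.image Prod.fst :=
    fun ρ₁ h => Finset.mem_image.mpr ⟨(ρ₁, ρ - ρ₁), Finset.mem_antidiagonal.mpr
      ⟨left_ne_zero_of_mul h, right_ne_zero_of_mul h, add_sub_cancel _ _⟩, rfl⟩
  have hinj : InjOn Prod.fst (P : Set (ℝ × ℝ)) := fun x hx y hy hxy => by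
    have hx := (Finset.mem_antidiagonal.mp hx).2.2
    have hy := (Finset.mem_antidiagonal.mp hy).2.2
    exact Prod.ext hxy (by linarith)
  rw [novikovMul, finsum_eq_sum_of_support_subset _ hsupp, Finset.sum_image hinj,
    HahnSeries.coeff_mul]
  refine Finset.sum_congr rfl fun x hx => ?_
  rw [← (Finset.mem_antidiagonal.mp hx).2.2, add_sub_cancel_left]

/-- The universal Novikov field `Λ` over `ℚ` is a field: every
nonzero element has a multiplicative inverse in `Λ`. -/
theorem stmt2 (a : ℝ → ℚ) (ha : NovikovCondition a) (hne : a ≠ 0) :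
    ∃ b : ℝ → ℚ, NovikovCondition b ∧ novikovMul a b = novikovOne := by
  rw [novikovCondition_iff_finiteBelow_support] at ha
  let A : HahnSeries ℝ ℚ := ⟨a, ha.isWF.isPWO⟩
  have hA : A ≠ 0 := fun h => hne (congrArg HahnSeries.coeff h)
  refine ⟨A⁻¹.coeff, (novikovCondition_iff_finiteBelow_support _).mpr
    (HahnSeries.finiteBelow_support_inv ha), ?_⟩
  rw [show a = A.coeff from rfl, novikovMul_coeff, mul_inv_cancel₀ hA]
  funext ρ
  exact HahnSeries.coeff_one
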